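/- arXiv:1802.07092 — 5 statements merged into one kernel-verified Lean document; each statement's English description precedes it below -/
import Mathlib

section
/- Let Ω be a topological space and let k : Ω × Ω → ℂ be a positive definite kernel such that the real part Re(k) : Ω × Ω → ℝ is continuous at every point of the diagonal D(Ω²) = {(x,x) : x ∈ Ω} (with respect to the product topology on Ω × Ω). Then k is continuous on all of Ω × Ω. -/
open Filter Topology ComplexOrder

/-!
By Moore's theorem a positive definite kernel is a Gram kernel, `k x y = ⟪φ x, φ y⟫`, for a
feature map `φ` into a Hilbert space (its reproducing kernel Hilbert space). Since
`‖φ y - φ x‖² = Re k(y, y) - 2 Re k(y, x) + Re k(x, x)`, continuity of `Re k` on the diagonal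
makes `φ` continuous, and then `k = ⟪φ ·, φ ·⟫` is jointly continuous.
-/

open ComplexConjugate InnerProductSpace RCLike

universe u

def IsPosDefKernel {Ω : Type*} (k : Ω → Ω → ℂ) : Prop :=
  ∀ (n : ℕ) (x : Fin n → Ω) (ξ : Fin n → ℂ), 0 ≤ ∑ i, ∑ j, k (x i) (x j) * ξ i * conj (ξ j)

/-- Mathlib's reproducing kernel Hilbert spaces are built from operator-valued kernels; a scalar
kernel is the case of values in `ℂ →L[ℂ] ℂ`. -/
noncomputable def scalarKernelMatrix {Ω : Type*} (k : Ω → Ω → ℂ) : Matrix Ω Ω (ℂ →L[ℂ] ℂ) :=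
  Matrix.of fun x y => k x y • 1

namespace IsPosDefKernel

variable {Ω : Type u} {k : Ω → Ω → ℂ}

theorem sum_sum_nonneg (hk : IsPosDefKernel k) (s : Finset Ω) (ξ : Ω → ℂ) :
    0 ≤ ∑ x ∈ s, ∑ y ∈ s, k x y * ξ x * conj (ξ y) := by
  have sum_eq (f : Ω → ℂ) : ∑ x ∈ s, f x = ∑ i, f (s.equivFin.symm i) := by
    rw [← Finset.sum_coe_sort s, ← s.equivFin.symm.sum_comp]
  simp only [sum_eq]
  exact hk _ _ _

theorem conj_apply (hk : IsPosDefKernel k) (x y : Ω) : conj (k x y) = k y x := by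
  have im_sum_eq_zero n (p : Fin n → Ω) ξ := (Complex.nonneg_iff.mp (hk n p ξ)).2.symm
  have hx : (k x x).im = 0 := by simpa using im_sum_eq_zero 1 ![x] ![1]
  have hy : (k y y).im = 0 := by simpa using im_sum_eq_zero 1 ![y] ![1]
  have h1 : (k x y).im + (k y x).im = 0 := by
    simpa [Fin.sum_univ_two, hx, hy] using im_sum_eq_zero 2 ![x, y] ![1, 1]
  have hI : -(k x y).re + (k y x).re = 0 := by
    simpa [Fin.sum_univ_two, hx, hy] using im_sum_eq_zero 2 ![x, y] ![1, Complex.I]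
  apply Complex.ext <;> simp only [Complex.conj_re, Complex.conj_im] <;> linarith

theorem posSemidef_scalarKernelMatrix (hk : IsPosDefKernel k) :
    (scalarKernelMatrix k).PosSemidef := by
  have herm : (scalarKernelMatrix k).IsHermitian := by
    ext x y
    simp [scalarKernelMatrix, conj_apply hk]
  apply ((RKHS.posSemidef_tfae (𝕜 := ℂ) (V := ℂ) (K := scalarKernelMatrix k)).out 2 0).mp
  refine ⟨herm, fun ξ => ?_⟩
  -- Mathlib's form conjugates the coefficient of the first slot, hence the test vector `conj ∘ ξ`.
  have h := hk.sum_sum_nonneg ξ.support fun x => conj (ξ x)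
  simp only [Finsupp.sum, scalarKernelMatrix, Matrix.of_apply, FunLike.coe_smul, Pi.smul_apply,
    one_apply_eq_self, inner_apply, map_mul, smul_eq_mul, conj_apply hk, re_to_complex]
  convert (Complex.nonneg_iff.mp h).1 using 4
  simp only [Complex.conj_conj]
  ring

theorem exists_eq_inner (hk : IsPosDefKernel k) :
    ∃ (H : Type u) (_ : NormedAddCommGroup H) (_ : InnerProductSpace ℂ H) (φ : Ω → H),
      ∀ x y, k x y = ⟪φ x, φ y⟫_ℂ := by
  have : Fact (scalarKernelMatrix k).PosSemidef := ⟨hk.posSemidef_scalarKernelMatrix⟩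
  refine ⟨RKHS.OfKernel (scalarKernelMatrix k), inferInstance, inferInstance,
    fun x => RKHS.kerFun _ x 1, fun x y => ?_⟩
  rw [← RKHS.kernel_inner, RKHS.OfKernel.kernel_ofKernel]
  simp [scalarKernelMatrix, conj_apply hk]

end IsPosDefKernel

theorem continuous_of_continuousAt_re_inner_diag {𝕜 X E : Type*} [RCLike 𝕜] [TopologicalSpace X]
    [SeminormedAddCommGroup E] [InnerProductSpace 𝕜 E] {φ : X → E}
    (h : ∀ x, ContinuousAt (fun p : X × X => re ⟪φ p.1, φ p.2⟫_𝕜) (x, x)) : Continuous φ := by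
  refine continuous_iff_continuousAt.2 fun x => ?_
  have hdiag : Tendsto (fun y => re ⟪φ y, φ y⟫_𝕜) (𝓝 x) (𝓝 (re ⟪φ x, φ x⟫_𝕜)) :=
    (h x).comp (f := fun y => (y, y)) (by fun_prop)
  have hleft : Tendsto (fun y => re ⟪φ y, φ x⟫_𝕜) (𝓝 x) (𝓝 (re ⟪φ x, φ x⟫_𝕜)) :=
    (h x).comp (f := fun y => (y, x)) (by fun_prop)
  have hsq : Tendsto (fun y => ‖φ y - φ x‖ ^ 2) (𝓝 x) (𝓝 0) := by
    have := (hdiag.sub (hleft.const_mul 2)).add_const (re ⟪φ x, φ x⟫_𝕜)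
    simp only [norm_sub_sq (𝕜 := 𝕜), ← inner_self_eq_norm_sq (𝕜 := 𝕜)]
    convert this using 2
    ring
  rw [ContinuousAt, tendsto_iff_norm_sub_tendsto_zero]
  simpa [Real.sqrt_sq (norm_nonneg _)] using hsq.sqrt

/-- A positive definite kernel whose real part is continuous at every
point of the diagonal is continuous on the whole product space. -/
theorem stmt2 {Ω : Type*} [TopologicalSpace Ω] (k : Ω → Ω → ℂ)
    (hpd : ∀ (n : ℕ) (x : Fin n → Ω) (ξ : Fin n → ℂ),
      0 ≤ ∑ i, ∑ j, k (x i) (x j) * ξ i * (starRingEnd ℂ) (ξ j))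
    (hre : ∀ x : Ω, ContinuousAt (fun p : Ω × Ω => (k p.1 p.2).re) (x, x)) :
    Continuous fun p : Ω × Ω => k p.1 p.2 := by
  obtain ⟨H, _, _, φ, hφ⟩ := IsPosDefKernel.exists_eq_inner hpd
  simp only [hφ] at hre ⊢
  have hφc : Continuous φ := continuous_of_continuousAt_re_inner_diag (𝕜 := ℂ) hre
  exact (hφc.comp continuous_fst).inner (hφc.comp continuous_snd)
end

section
/- Let Ω be an open subset of ℂⁿ, let S = codiff(Ω) = {x − conj(y) : x, y ∈ Ω} (conjugation taken coordinatewise), and let f : S → ℂ be a positive definite function, i.e. k(x,y) := f(x − conj(y)) is a positive definite kernel on Ω. Then f is continuous on S if and only if Re(f) is continuous at every point of D_Ω(S) = {x − conj(x) : x ∈ Ω} (as a function on S with the subspace topology). -/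
open Filter Topology ComplexOrder ComplexConjugate

/-!
The kernel `k x y = f (x - star y)` induces a positive semidefinite Hermitian form on coefficient
vectors, and Cauchy–Schwarz for that form gives
`‖k x y - k x₀ y‖² ≤ Re (k x x + k x₀ x₀ - 2 k x x₀) * k y y`.
A point of `S` near `x₀ - star y₀` is `x - star y₀` with `x ∈ Ω` near `x₀` (as `Ω` is open), and
then `x - star x` and `x - star x₀` are points of `S` near the diagonal point `x₀ - star x₀`, so
continuity of `Re f` there drives the right-hand side to `0`.
-/

def IsPosDefKernelOn {α : Type*} (Ω : Set α) (k : α → α → ℂ) : Prop :=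
  ∀ (m : ℕ) (x : Fin m → α), (∀ i, x i ∈ Ω) → ∀ ξ : Fin m → ℂ,
    0 ≤ ∑ i, ∑ j, k (x i) (x j) * ξ i * conj (ξ j)

namespace IsPosDefKernelOn

variable {α : Type*} {Ω : Set α} {k : α → α → ℂ} {x x' y : α}

theorem apply_self_nonneg (hk : IsPosDefKernelOn Ω k) (hx : x ∈ Ω) : 0 ≤ k x x := by
  simpa using hk 1 ![x] (by simp [hx]) ![1]

theorem apply_swap (hk : IsPosDefKernelOn Ω k) (hx : x ∈ Ω) (hy : y ∈ Ω) :
    k y x = conj (k x y) := by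
  -- the weights `(1, 1)` and `(1, i)` force `Im (k x y + k y x) = 0` and `Re (k x y) = Re (k y x)`
  have hxy : ∀ i, ![x, y] i ∈ Ω := by simp [Fin.forall_fin_two, hx, hy]
  have h₁ := (Complex.le_def.1 (hk 2 ![x, y] hxy ![1, 1])).2
  have h₂ := (Complex.le_def.1 (hk 2 ![x, y] hxy ![1, Complex.I])).2
  have hxx := (Complex.le_def.1 (hk.apply_self_nonneg hx)).2
  have hyy := (Complex.le_def.1 (hk.apply_self_nonneg hy)).2
  simp only [Complex.zero_im, Fin.sum_univ_two, Fin.isValue, Matrix.cons_val_zero, map_one,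
    mul_one, Matrix.cons_val_one, Matrix.cons_val_fin_one, Complex.add_im, Complex.conj_I, mul_neg,
    Complex.neg_im, Complex.mul_im, Complex.I_im, Complex.I_re, mul_zero, add_zero, Complex.mul_re,
    zero_sub, neg_neg] at h₁ h₂ hxx hyy
  apply Complex.ext <;> simp only [Complex.conj_re, Complex.conj_im] <;> linarith

@[reducible] def gramCore (hk : IsPosDefKernelOn Ω k) {m : ℕ} (x : Fin m → α)
    (hx : ∀ i, x i ∈ Ω) : PreInnerProductSpace.Core ℂ (Fin m → ℂ) where
  inner u v := ∑ i, ∑ j, k (x i) (x j) * v i * conj (u j)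
  conj_inner_symm u v := by
    simp only [map_sum, map_mul, Complex.conj_conj, ← hk.apply_swap (hx _) (hx _)]
    rw [Finset.sum_comm]
    simp only [mul_right_comm]
  re_inner_nonneg u := (Complex.le_def.1 (hk m x hx u)).1
  add_left u w v := by simp [mul_add, Finset.sum_add_distrib]
  smul_left u v r := by
    simp only [Pi.smul_apply, smul_eq_mul, map_mul, Finset.mul_sum]
    exact Finset.sum_congr rfl fun _ _ => Finset.sum_congr rfl fun _ _ => by ring

theorem inner_gramCore (hk : IsPosDefKernelOn Ω k) {m : ℕ} (x : Fin m → α) (hx : ∀ i, x i ∈ Ω)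
    (u v : Fin m → ℂ) :
    @inner ℂ _ (hk.gramCore x hx).toInner u v = ∑ i, ∑ j, k (x i) (x j) * v i * conj (u j) :=
  rfl

theorem norm_sub_sq_le (hk : IsPosDefKernelOn Ω k) (hx : x ∈ Ω) (hx' : x' ∈ Ω) (hy : y ∈ Ω) :
    ‖k x y - k x' y‖ ^ 2 ≤ (k x x + k x' x' - k x x' - k x' x).re * (k y y).re := by
  let c := hk.gramCore ![x, x', y] (by simp [Fin.forall_fin_succ, hx, hx', hy])
  have := InnerProductSpace.Core.inner_mul_inner_self_le (c := c) ![1, -1, 0] ![0, 0, 1]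
  rw [InnerProductSpace.Core.norm_inner_symm] at this
  simp only [Nat.succ_eq_add_one, Nat.reduceAdd, inner_gramCore, Fin.sum_univ_three, Fin.isValue,
    Matrix.cons_val_zero, map_zero, mul_zero, Matrix.cons_val_one, add_zero, Matrix.cons_val,
    map_one, mul_one, zero_add, mul_neg, ← sub_eq_add_neg, map_neg, Finset.sum_sub_distrib,
    RCLike.re_to_complex, c] at this
  rw [sq]
  refine this.trans_eq ?_
  congr 2
  ring

theorem tendsto_apply_left (hk : IsPosDefKernelOn Ω k) {β : Type*} {l : Filter β} {X : β → α}
    {x₀ : α} (hx₀ : x₀ ∈ Ω) (hy : y ∈ Ω) (hXΩ : ∀ᶠ b in l, X b ∈ Ω)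
    (hdiag : Tendsto (fun b => (k (X b) (X b)).re) l (𝓝 (k x₀ x₀).re))
    (hcross : Tendsto (fun b => (k (X b) x₀).re) l (𝓝 (k x₀ x₀).re)) :
    Tendsto (fun b => k (X b) y) l (𝓝 (k x₀ y)) := by
  have hbound : Tendsto (fun b => ((k (X b) (X b)).re + (k x₀ x₀).re - 2 * (k (X b) x₀).re) *
      (k y y).re) l (𝓝 0) := by
    have h := ((hdiag.add_const (k x₀ x₀).re).sub (hcross.const_mul 2)).mul_const (k y y).re
    rwa [show ((k x₀ x₀).re + (k x₀ x₀).re - 2 * (k x₀ x₀).re) * (k y y).re = 0 by ring] at h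
  have hsq : Tendsto (fun b => ‖k (X b) y - k x₀ y‖ ^ 2) l (𝓝 0) := by
    refine squeeze_zero' (.of_forall fun _ => by positivity) ?_ hbound
    filter_upwards [hXΩ] with b hb
    have h := hk.norm_sub_sq_le hb hx₀ hy
    rw [hk.apply_swap hb hx₀] at h
    simp only [Complex.sub_re, Complex.add_re, Complex.conj_re] at h
    linarith
  rw [tendsto_iff_norm_sub_tendsto_zero]
  simpa using hsq.sqrt

end IsPosDefKernelOn

section Codiff

variable {E : Type*} [AddGroup E] [StarAddMonoid E] [TopologicalSpace E]
  [IsTopologicalAddGroup E] [ContinuousStar E]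

def codiff (Ω : Set E) : Set E := {z | ∃ x ∈ Ω, ∃ y ∈ Ω, z = x - star y}

theorem tendsto_sub_star_nhdsWithin_codiff {Ω : Set E} {β : Type*} {l : Filter β} {X Y : β → E}
    {x₀ y₀ : E} (hX : Tendsto X l (𝓝 x₀)) (hY : Tendsto Y l (𝓝 y₀))
    (hXΩ : ∀ᶠ b in l, X b ∈ Ω) (hYΩ : ∀ᶠ b in l, Y b ∈ Ω) :
    Tendsto (fun b => X b - star (Y b)) l (𝓝[codiff Ω] (x₀ - star y₀)) :=
  tendsto_nhdsWithin_iff.2 ⟨hX.sub hY.star, by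
    filter_upwards [hXΩ, hYΩ] with b hx hy using ⟨_, hx, _, hy, rfl⟩⟩

theorem IsPosDefKernelOn.continuousOn_codiff_iff {Ω : Set E} (hΩ : IsOpen Ω) {f : E → ℂ}
    (hf : IsPosDefKernelOn Ω fun x y => f (x - star y)) :
    ContinuousOn f (codiff Ω) ↔
      ∀ x ∈ Ω, ContinuousWithinAt (fun z => (f z).re) (codiff Ω) (x - star x) := by
  refine ⟨fun h x hx => Complex.continuous_re.continuousAt.comp_continuousWithinAt
    (h _ ⟨x, hx, x, hx, rfl⟩), fun h => ?_⟩
  rintro _ ⟨x₀, hx₀, y₀, hy₀, rfl⟩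
  set X : E → E := fun z => z + star y₀
  have hX : Tendsto X (𝓝[codiff Ω] (x₀ - star y₀)) (𝓝 x₀) := by
    simpa [X] using ((continuous_add_const (star y₀)).tendsto (x₀ - star y₀)).mono_left
      nhdsWithin_le_nhds
  have hXΩ := hX.eventually (hΩ.eventually_mem hx₀)
  have hdiag := (h x₀ hx₀).tendsto.comp (tendsto_sub_star_nhdsWithin_codiff hX hX hXΩ hXΩ)
  have hcross := (h x₀ hx₀).tendsto.comp
    (tendsto_sub_star_nhdsWithin_codiff hX tendsto_const_nhds hXΩ (.of_forall fun _ => hx₀))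
  simpa [X, ContinuousWithinAt] using hf.tendsto_apply_left hx₀ hy₀ hXΩ hdiag hcross

end Codiff

/-- A positive definite function on the codifference set
`S = {x − conj y : x, y ∈ Ω} ⊆ ℂⁿ` is continuous on `S` iff its real part is continuous
(within `S`) at every point of the diagonal `D_Ω(S) = {x − conj x : x ∈ Ω}`. -/
theorem stmt5 (n : ℕ) (Ω : Set (Fin n → ℂ)) (hΩ : IsOpen Ω)
    (S : Set (Fin n → ℂ))
    (hS : S = {z | ∃ x ∈ Ω, ∃ y ∈ Ω, z = x - fun i => (starRingEnd ℂ) (y i)})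
    (f : (Fin n → ℂ) → ℂ)
    (hpd : ∀ (m : ℕ) (x : Fin m → (Fin n → ℂ)), (∀ i, x i ∈ Ω) → ∀ ξ : Fin m → ℂ,
      0 ≤ ∑ i, ∑ j, f (x i - fun t => (starRingEnd ℂ) (x j t)) * ξ i * (starRingEnd ℂ) (ξ j)) :
    ContinuousOn f S ↔
      ∀ x ∈ Ω, ContinuousWithinAt (fun z => (f z).re) S
        (x - fun i => (starRingEnd ℂ) (x i)) := by
  subst hS
  exact IsPosDefKernelOn.continuousOn_codiff_iff hΩ hpd
end

section
/- Let U ⊆ ℂ² be open and let g : U → ℂ be continuous and separately holomorphic (for each fixed v, u ↦ g(u,v) is holomorphic on the corresponding open slice, and for each fixed u, v ↦ g(u,v) is holomorphic on the corresponding open slice). Then for every (u,v) ∈ U the iterated partial derivatives ∂²g/∂u∂v and ∂²g/∂v∂u exist at (u,v), are equal, and satisfy ∂²g/∂v∂u (u,v) = lim_{(h,l)→(0,0)} Δ_{h,l} g(u,v) / (h·l), the limit being over pairs of nonzero complex h, l with (u+h, v+l), (u+h,v), (u,v+l) ∈ U. -/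
open Filter Topology

/-!
Fix a closed bidisc of radius `r` around `(a, b)` inside `U`. Cauchy's formula in the form
`dslope f c w = (2πi)⁻¹ ∮ f z / ((z - w) (z - c)) dz`, applied first in `v` and then in `u` to
the holomorphic function `u ↦ (g (u, b + l) - g (u, b)) / l` (`l ≠ 0`), writes `dslope` in `u` of
that function at `a + h` as a double Cauchy integral `D (h, l)` over the torus. For `h ≠ 0` this is
`Δ_{h,l} g (a, b) / (h l)`, for `h = 0` it is the difference quotient of `∂g/∂u (a, ·)` at `b`.
Continuity of `g` on the torus makes `D` continuous, so both limits exist and equal `D (0, 0)`.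
Exchanging the variables does the same for `∂²g/∂u∂v`; as `Δ_{h,l} g / (h l)` is symmetric in the
two variables, the mixed derivatives are limits of the same quotient, hence equal.
-/

open Set Metric Complex Real

theorem sub_ne_zero_of_mem_sphere_of_mem_ball {G : Type*} [SeminormedAddCommGroup G] {c w z : G}
    {R : ℝ} (hz : z ∈ sphere c R) (hw : w ∈ ball c R) : z - w ≠ 0 :=
  sub_ne_zero.2 (sphere_disjoint_ball.ne_of_mem hz hw)

theorem add_mem_ball_of_mem_ball_zero {G : Type*} [SeminormedAddCommGroup G] {c h : G} {r : ℝ}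
    (hh : h ∈ ball 0 r) : c + h ∈ ball c r :=
  add_mem_ball_iff_norm.2 (mem_ball_zero_iff.1 hh)

section CauchyDslope

variable {E : Type*} [NormedAddCommGroup E] [NormedSpace ℂ E]

theorem continuousOn_parametric_circleIntegral_of_continuousOn {P : Type*} [TopologicalSpace P]
    {F : P → ℂ → E} {S : Set P} {c : ℂ} {R : ℝ} (hR : 0 ≤ R)
    (hF : ContinuousOn (fun x : P × ℂ => F x.1 x.2) (S ×ˢ sphere c R)) :
    ContinuousOn (fun p => ∮ z in C(c, R), F p z) S := by
  rw [continuousOn_iff_continuous_domRestrict]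
  refine intervalIntegral.continuous_parametric_intervalIntegral_of_continuous' ?_ _ _
  have hmem (x : S × ℝ) : ((x.1 : P), circleMap c R x.2) ∈ S ×ˢ sphere c R :=
    ⟨x.1.2, circleMap_mem_sphere c hR x.2⟩
  simp only [deriv_circleMap]
  exact ((continuous_circleMap 0 R).mul continuous_const).comp continuous_snd |>.smul <|
    hF.comp_continuous (by fun_prop) hmem

noncomputable def cauchyDslope (f : ℂ → E) (c : ℂ) (R : ℝ) (w : ℂ) : E :=
  (2 * π * I)⁻¹ • ∮ z in C(c, R), ((z - w)⁻¹ * (z - c)⁻¹) • f z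

theorem continuousOn_cauchyDslope {P : Type*} [TopologicalSpace P] {F : P → ℂ → E} {w : P → ℂ}
    {S : Set P} {c : ℂ} {R : ℝ} (hR : 0 ≤ R)
    (hF : ContinuousOn (fun x : P × ℂ => F x.1 x.2) (S ×ˢ sphere c R))
    (hw : ContinuousOn w S) (hwS : MapsTo w S (ball c R)) :
    ContinuousOn (fun p => cauchyDslope (F p) c R (w p)) S := by
  refine (continuousOn_parametric_circleIntegral_of_continuousOn hR ?_).const_smul _
  refine ContinuousOn.smul (ContinuousOn.mul ?_ ?_) hF
  · exact (continuousOn_snd.sub (hw.comp continuousOn_fst fun x hx => hx.1)).inv₀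
      fun x hx => sub_ne_zero_of_mem_sphere_of_mem_ball hx.2 (hwS hx.1)
  · exact (continuousOn_snd.sub continuousOn_const).inv₀ fun x hx =>
      sub_ne_zero_of_mem_sphere_of_mem_ball hx.2 (mem_ball_self (pos_of_mem_ball (hwS hx.1)))

theorem cauchyDslope_congr {f f' : ℂ → E} {c : ℂ} {R : ℝ} (hR : 0 ≤ R)
    (h : EqOn f f' (sphere c R)) (w : ℂ) : cauchyDslope f c R w = cauchyDslope f' c R w := by
  unfold cauchyDslope
  rw [circleIntegral.integral_congr hR fun z hz => by rw [h hz]]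

theorem cauchyKernel_eq {c w z : ℂ} (hzw : z - w ≠ 0) (hzc : z - c ≠ 0) (hwc : w - c ≠ 0) :
    (z - w)⁻¹ * (z - c)⁻¹ = (w - c)⁻¹ * ((z - w)⁻¹ - (z - c)⁻¹) := by
  field_simp
  ring

theorem DiffContOnCl.dslope_eq_cauchyDslope [CompleteSpace E] {f : ℂ → E} {c w : ℂ} {R : ℝ}
    (hf : DiffContOnCl ℂ f (ball c R)) (hw : w ∈ ball c R) :
    dslope f c w = cauchyDslope f c R w := by
  have hR : 0 < R := pos_of_mem_ball hw
  have hc : c ∈ ball c R := mem_ball_self hR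
  have h2πI : (2 * π * I : ℂ) ≠ 0 := two_pi_I_ne_zero
  rw [cauchyDslope, eq_inv_smul_iff₀ h2πI, eq_comm]
  rcases eq_or_ne w c with rfl | hwc
  · rw [dslope_same, ← hf.deriv_eq_smul_circleIntegral hR]
    congr 1
    ext z
    rw [one_div, sq, mul_inv]
  have hint (v : ℂ) (hv : v ∈ ball c R) : CircleIntegrable (fun z => (z - v)⁻¹ • f z) c R :=
    ((continuousOn_id.sub continuousOn_const).inv₀
      (fun z hz => sub_ne_zero_of_mem_sphere_of_mem_ball hz hv)).smul
      (hf.continuousOn_ball.mono sphere_subset_closedBall) |>.circleIntegrable hR.le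
  calc (∮ z in C(c, R), ((z - w)⁻¹ * (z - c)⁻¹) • f z)
      = ∮ z in C(c, R), (w - c)⁻¹ • ((z - w)⁻¹ • f z - (z - c)⁻¹ • f z) := by
        refine circleIntegral.integral_congr hR.le fun z hz => ?_
        rw [cauchyKernel_eq (sub_ne_zero_of_mem_sphere_of_mem_ball hz hw)
          (sub_ne_zero_of_mem_sphere_of_mem_ball hz hc) (sub_ne_zero.2 hwc), mul_smul, sub_smul]
    _ = (w - c)⁻¹ • ((2 * π * I : ℂ) • f w - (2 * π * I : ℂ) • f c) := by
        rw [circleIntegral.integral_smul, circleIntegral.integral_sub (hint w hw) (hint c hc),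
          hf.circleIntegral_sub_inv_smul hw, hf.circleIntegral_sub_inv_smul hc]
    _ = (2 * π * I : ℂ) • dslope f c w := by
        rw [dslope_of_ne _ hwc, slope_def_module, ← smul_sub, smul_comm]

end CauchyDslope

theorem deriv_slope_comm {𝕜 E : Type*} [NontriviallyNormedField 𝕜] [NormedAddCommGroup E]
    [NormedSpace 𝕜 E] {g : 𝕜 × 𝕜 → E} {a v₁ v₂ : 𝕜}
    (h₁ : DifferentiableAt 𝕜 (fun u => g (u, v₁)) a)
    (h₂ : DifferentiableAt 𝕜 (fun u => g (u, v₂)) a) :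
    deriv (fun u => slope (fun v => g (u, v)) v₁ v₂) a =
      slope (fun v => deriv (fun u => g (u, v)) a) v₁ v₂ := by
  simp only [slope_def_module]
  exact ((h₂.hasDerivAt.sub h₁.hasDerivAt).const_smul _).deriv

noncomputable def secondDiffQuot (g : ℂ × ℂ → ℂ) (p hl : ℂ × ℂ) : ℂ :=
  (g (p.1 + hl.1, p.2 + hl.2) - g (p.1, p.2 + hl.2) - g (p.1 + hl.1, p.2) + g (p.1, p.2)) /
    (hl.1 * hl.2)

theorem secondDiffQuot_comp_swap (g : ℂ × ℂ → ℂ) (p hl : ℂ × ℂ) :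
    secondDiffQuot (g ∘ Prod.swap) p.swap hl.swap = secondDiffQuot g p hl := by
  simp only [secondDiffQuot, Function.comp_apply, Prod.fst_swap, Prod.snd_swap, Prod.swap_prod_mk]
  ring

theorem slope_slope_eq_secondDiffQuot (g : ℂ × ℂ → ℂ) (p : ℂ × ℂ) {h l : ℂ} (hh : h ≠ 0)
    (hl : l ≠ 0) :
    slope (fun u => slope (fun v => g (u, v)) p.2 (p.2 + l)) p.1 (p.1 + h) =
      secondDiffQuot g p (h, l) := by
  simp only [slope_def_field, secondDiffQuot, add_sub_cancel_left]
  field_simp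
  ring

section SeparatelyHolomorphic

noncomputable def mixedCauchyIntegral (g : ℂ × ℂ → ℂ) (p : ℂ × ℂ) (r : ℝ) (hl : ℂ × ℂ) : ℂ :=
  cauchyDslope (fun s => cauchyDslope (fun t => g (s, t)) p.2 r (p.2 + hl.2)) p.1 r (p.1 + hl.1)

theorem continuousOn_mixedCauchyIntegral {g : ℂ × ℂ → ℂ} {p : ℂ × ℂ} {r : ℝ} (hr : 0 ≤ r)
    (hg : ContinuousOn g (sphere p.1 r ×ˢ sphere p.2 r)) :
    ContinuousOn (mixedCauchyIntegral g p r) (ball 0 r ×ˢ ball 0 r) := by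
  refine continuousOn_cauchyDslope hr ?_ (by fun_prop)
    fun hl hhl => add_mem_ball_of_mem_ball_zero hhl.1
  refine continuousOn_cauchyDslope hr ?_ (by fun_prop)
    fun x hx => add_mem_ball_of_mem_ball_zero hx.1.2
  exact hg.comp (by fun_prop) fun y hy => ⟨hy.1.2, hy.2⟩

variable {U : Set (ℂ × ℂ)} {g : ℂ × ℂ → ℂ} {p : ℂ × ℂ} {r : ℝ}

theorem diffContOnCl_fst_section (hcont : ContinuousOn g U)
    (hu : ∀ q ∈ U, DifferentiableAt ℂ (fun u => g (u, q.2)) q.1) (hsub : closedBall p r ⊆ U)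
    {v : ℂ} (hvr : v ∈ closedBall p.2 r) : DiffContOnCl ℂ (fun u => g (u, v)) (ball p.1 r) := by
  have hmem {u : ℂ} (hur : u ∈ closedBall p.1 r) : (u, v) ∈ U :=
    hsub (closedBall_prod_same p.1 p.2 r ▸ ⟨hur, hvr⟩)
  refine ⟨fun u hur => (hu (u, v) (hmem (ball_subset_closedBall hur))).differentiableWithinAt, ?_⟩
  exact hcont.comp (by fun_prop) fun u hur => hmem (closure_ball_subset_closedBall hur)

theorem diffContOnCl_snd_section (hcont : ContinuousOn g U)
    (hv : ∀ q ∈ U, DifferentiableAt ℂ (fun v => g (q.1, v)) q.2) (hsub : closedBall p r ⊆ U)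
    {u : ℂ} (hur : u ∈ closedBall p.1 r) : DiffContOnCl ℂ (fun v => g (u, v)) (ball p.2 r) := by
  have hmem {v : ℂ} (hvr : v ∈ closedBall p.2 r) : (u, v) ∈ U :=
    hsub (closedBall_prod_same p.1 p.2 r ▸ ⟨hur, hvr⟩)
  refine ⟨fun v hvr => (hv (u, v) (hmem (ball_subset_closedBall hvr))).differentiableWithinAt, ?_⟩
  exact hcont.comp (by fun_prop) fun v hvr => hmem (closure_ball_subset_closedBall hvr)

theorem dslope_slope_eq_mixedCauchyIntegral (hcont : ContinuousOn g U)
    (hu : ∀ q ∈ U, DifferentiableAt ℂ (fun u => g (u, q.2)) q.1)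
    (hv : ∀ q ∈ U, DifferentiableAt ℂ (fun v => g (q.1, v)) q.2) (hsub : closedBall p r ⊆ U)
    {h l : ℂ} (hh : h ∈ ball 0 r) (hl : l ∈ ball 0 r) (hl₀ : l ≠ 0) :
    dslope (fun u => slope (fun v => g (u, v)) p.2 (p.2 + l)) p.1 (p.1 + h) =
      mixedCauchyIntegral g p r (h, l) := by
  have hr : 0 ≤ r := (pos_of_mem_ball hh).le
  have hslope :
      DiffContOnCl ℂ (fun u => slope (fun v => g (u, v)) p.2 (p.2 + l)) (ball p.1 r) := by
    simp only [slope_def_module]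
    exact ((diffContOnCl_fst_section hcont hu hsub
      (ball_subset_closedBall (add_mem_ball_of_mem_ball_zero hl))).sub
      (diffContOnCl_fst_section hcont hu hsub (mem_closedBall_self hr))).const_smul
        (p.2 + l - p.2)⁻¹
  rw [hslope.dslope_eq_cauchyDslope (add_mem_ball_of_mem_ball_zero hh), mixedCauchyIntegral]
  refine cauchyDslope_congr hr (fun s hs => ?_) _
  rw [← dslope_of_ne _ (by simpa using hl₀), (diffContOnCl_snd_section hcont hv hsub
    (sphere_subset_closedBall hs)).dslope_eq_cauchyDslope (add_mem_ball_of_mem_ball_zero hl)]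

theorem exists_hasDerivAt_deriv_and_tendsto_secondDiffQuot (hU : IsOpen U)
    (hcont : ContinuousOn g U) (hu : ∀ q ∈ U, DifferentiableAt ℂ (fun u => g (u, q.2)) q.1)
    (hv : ∀ q ∈ U, DifferentiableAt ℂ (fun v => g (q.1, v)) q.2) (hp : p ∈ U) :
    ∃ M, HasDerivAt (fun v => deriv (fun u => g (u, v)) p.1) M p.2 ∧
      Tendsto (secondDiffQuot g p) (𝓝[{q : ℂ × ℂ | q.1 ≠ 0 ∧ q.2 ≠ 0}] 0) (𝓝 M) := by
  obtain ⟨r, hr, hsub⟩ := nhds_basis_closedBall.mem_iff.1 (hU.mem_nhds hp)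
  have hsphere : sphere p.1 r ×ˢ sphere p.2 r ⊆ U := fun q hq => hsub <|
    closedBall_prod_same p.1 p.2 r ▸ prod_mono sphere_subset_closedBall sphere_subset_closedBall hq
  have hD : Tendsto (mixedCauchyIntegral g p r) (𝓝 0) (𝓝 (mixedCauchyIntegral g p r 0)) :=
    (continuousOn_mixedCauchyIntegral hr.le (hcont.mono hsphere)).continuousAt
      (prod_mem_nhds (ball_mem_nhds 0 hr) (ball_mem_nhds 0 hr))
  refine ⟨mixedCauchyIntegral g p r 0, ?_, ?_⟩
  · rw [hasDerivAt_iff_tendsto_slope]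
    have hshift : Tendsto (fun v => ((0 : ℂ), v - p.2)) (𝓝[≠] p.2) (𝓝 0) :=
      (Continuous.tendsto' (by fun_prop) p.2 _ (by simp [Prod.zero_eq_mk])).mono_left
        nhdsWithin_le_nhds
    refine (hD.comp hshift).congr' ?_
    filter_upwards [self_mem_nhdsWithin, nhdsWithin_le_nhds (ball_mem_nhds p.2 hr)]
      with v hvp hvr
    have hvr' : v - p.2 ∈ ball 0 r := by rwa [mem_ball_zero_iff, ← dist_eq_norm]
    rw [Function.comp_apply, ← dslope_slope_eq_mixedCauchyIntegral hcont hu hv hsub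
      (mem_ball_self hr) hvr' (sub_ne_zero.2 hvp), add_zero, add_sub_cancel, dslope_same,
      deriv_slope_comm]
    · exact hu p hp
    · exact hu (p.1, v) (hsub (closedBall_prod_same p.1 p.2 r ▸
        ⟨mem_closedBall_self hr.le, ball_subset_closedBall hvr⟩))
  · refine (hD.mono_left nhdsWithin_le_nhds).congr' ?_
    filter_upwards [self_mem_nhdsWithin,
      nhdsWithin_le_nhds (prod_mem_nhds (ball_mem_nhds 0 hr) (ball_mem_nhds 0 hr))]
      with ⟨h, l⟩ ⟨hh, hl⟩ ⟨hhr, hlr⟩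
    rw [← dslope_slope_eq_mixedCauchyIntegral hcont hu hv hsub hhr hlr hl,
      dslope_of_ne _ (by simpa using hh), slope_slope_eq_secondDiffQuot g p hh hl]

end SeparatelyHolomorphic

theorem nhdsWithin_prod_compl_singleton_neBot {X Y : Type*} [TopologicalSpace X]
    [TopologicalSpace Y] (x : X) (y : Y) [(𝓝[≠] x).NeBot] [(𝓝[≠] y).NeBot] :
    (𝓝[{q : X × Y | q.1 ≠ x ∧ q.2 ≠ y}] (x, y)).NeBot := by
  change (𝓝[{x}ᶜ ×ˢ {y}ᶜ] (x, y)).NeBot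
  rw [nhdsWithin_prod_eq]
  infer_instance

/-- For a continuous, separately holomorphic function `g` on an open
`U ⊆ ℂ²`, the two mixed second partial derivatives exist, coincide, and equal the limit
of second finite difference quotients. -/
theorem stmt8 (U : Set (ℂ × ℂ)) (hU : IsOpen U) (g : ℂ × ℂ → ℂ)
    (hcont : ContinuousOn g U)
    (hu : ∀ p ∈ U, DifferentiableAt ℂ (fun u => g (u, p.2)) p.1)
    (hv : ∀ p ∈ U, DifferentiableAt ℂ (fun v => g (p.1, v)) p.2) :
    ∀ p ∈ U,
      DifferentiableAt ℂ (fun v => deriv (fun u => g (u, v)) p.1) p.2 ∧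
      DifferentiableAt ℂ (fun u => deriv (fun v => g (u, v)) p.2) p.1 ∧
      deriv (fun v => deriv (fun u => g (u, v)) p.1) p.2 =
        deriv (fun u => deriv (fun v => g (u, v)) p.2) p.1 ∧
      Tendsto
        (fun hl : ℂ × ℂ =>
          (g (p.1 + hl.1, p.2 + hl.2) - g (p.1, p.2 + hl.2) -
              g (p.1 + hl.1, p.2) + g (p.1, p.2)) / (hl.1 * hl.2))
        (𝓝[{q : ℂ × ℂ | q.1 ≠ 0 ∧ q.2 ≠ 0}] (0 : ℂ × ℂ))
        (𝓝 (deriv (fun v => deriv (fun u => g (u, v)) p.1) p.2)) := by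
  intro p hp
  obtain ⟨M, hM, hMlim⟩ := exists_hasDerivAt_deriv_and_tendsto_secondDiffQuot hU hcont hu hv hp
  obtain ⟨M', hM', hM'lim⟩ := exists_hasDerivAt_deriv_and_tendsto_secondDiffQuot
    (hU.preimage continuous_swap) (hcont.comp continuous_swap.continuousOn fun _ hq => hq)
    (fun q hq => hv q.swap hq) (fun q hq => hu q.swap hq) (p := p.swap) hp
  have hswap : Tendsto Prod.swap (𝓝[{q : ℂ × ℂ | q.1 ≠ 0 ∧ q.2 ≠ 0}] 0)
      (𝓝[{q : ℂ × ℂ | q.1 ≠ 0 ∧ q.2 ≠ 0}] 0) :=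
    continuous_swap.continuousWithinAt.tendsto_nhdsWithin fun _ hq => ⟨hq.2, hq.1⟩
  have hM'lim' : Tendsto (secondDiffQuot g p) (𝓝[{q : ℂ × ℂ | q.1 ≠ 0 ∧ q.2 ≠ 0}] 0) (𝓝 M') :=
    (hM'lim.comp hswap).congr (secondDiffQuot_comp_swap g p)
  have : (𝓝[{q : ℂ × ℂ | q.1 ≠ 0 ∧ q.2 ≠ 0}] (0 : ℂ × ℂ)).NeBot :=
    nhdsWithin_prod_compl_singleton_neBot (0 : ℂ) (0 : ℂ)
  obtain rfl : M = M' := tendsto_nhds_unique hMlim hM'lim'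
  exact ⟨hM.differentiableAt, hM'.differentiableAt, hM.deriv.trans hM'.deriv.symm,
    hM.deriv ▸ hMlim⟩
end

section
/- Let Ω ⊆ ℝ be open and let k : Ω × Ω → ℂ be a positive definite kernel of class S₁(U) on some open set U ⊆ ℝ² with D(Ω²) ⊆ U ⊆ Ω × Ω. Then: (1) for every fixed u ∈ Ω the function v ↦ ∂k/∂v (u,v) is continuous on Ω, and for every fixed v ∈ Ω the function u ↦ ∂k/∂u (u,v) is continuous on Ω; (2) for every u₀ ∈ Ω there exists a neighborhood V of u₀ in Ω such that the family of functions {v ↦ ∂k/∂v (u,v) : u ∈ V} is equicontinuous on Ω, and the analogous equicontinuity statement holds for the family {u ↦ ∂k/∂u (u,v) : v ∈ W} for a suitable neighborhood W of any v₀ ∈ Ω. -/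
open Filter Topology ComplexOrder

/-- Partial derivative in the first variable. -/
noncomputable def pderiv1 (k : ℝ × ℝ → ℂ) : ℝ × ℝ → ℂ :=
  fun p => deriv (fun u => k (u, p.2)) p.1

/-- Partial derivative in the second variable. -/
noncomputable def pderiv2 (k : ℝ × ℝ → ℂ) : ℝ × ℝ → ℂ :=
  fun p => deriv (fun v => k (p.1, v)) p.2

/-- `k` is of class `S_n(U)`. -/
def IsClassSn (n : ℕ) (U : Set (ℝ × ℝ)) (k : ℝ × ℝ → ℂ) : Prop :=
  (∀ m₁ < n, ∀ p ∈ U, DifferentiableAt ℝ (fun u => (pderiv1^[m₁] k) (u, p.2)) p.1) ∧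
  (∀ m₁ ≤ n, ∀ m₂ < n, ∀ p ∈ U,
    DifferentiableAt ℝ (fun v => (pderiv2^[m₂] (pderiv1^[m₁] k)) (p.1, v)) p.2) ∧
  (∀ m₁ ≤ n, ∀ m₂ ≤ n, ContinuousOn (pderiv2^[m₂] (pderiv1^[m₁] k)) U)

/-!
Positive definiteness yields the Cauchy–Schwarz inequality
`‖∑ⱼ k (u, yⱼ) * conj cⱼ‖² ≤ k (u, u) * ∑ᵢⱼ k (yᵢ, yⱼ) * cᵢ * conj cⱼ` for `u, yⱼ ∈ Ω`.
For the four points `v', v, w', w` with the weights that make the left-hand sum the difference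
of the slopes of `k (u, ·)` over `[v, v']` and `[w, w']`, the quadratic form on the right is a
signed sum of four mixed second divided differences of `k`. Near a diagonal point `(v₀, v₀)` these
all tend to `∂²k/∂v∂u (v₀, v₀)` by the mean value theorem, so the form is small, uniformly in `u`,
although `k` is regular only near the diagonal. Hence the difference quotients of `k (u, ·)` are
Cauchy, `∂k/∂v` exists on all of `Ω × Ω`, and `‖∂k/∂v (u, v) - ∂k/∂v (u, w)‖²` is at most
`k (u, u)` times a quantity that is small for `v, w` near `v₀`: this is continuity, and
equicontinuity wherever `k (u, u)` stays bounded. Hermitian symmetry,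
`∂k/∂u (u, v) = conj (∂k/∂v (v, u))`, carries everything over to `∂k/∂u`.
-/

open ComplexConjugate Metric

theorem Convex.norm_image_sub_sub_smul_le {E : Type*} [NormedAddCommGroup E] [NormedSpace ℝ E]
    {f f' : ℝ → E} {s : Set ℝ} {c : E} {C : ℝ} (hs : Convex ℝ s)
    (hf : ∀ x ∈ s, HasDerivWithinAt f (f' x) s x) (bound : ∀ x ∈ s, ‖f' x - c‖ ≤ C)
    {x y : ℝ} (hx : x ∈ s) (hy : y ∈ s) : ‖f y - f x - (y - x) • c‖ ≤ C * |y - x| := by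
  have hg : ∀ x ∈ s, HasDerivWithinAt (fun x => f x - x • c) (f' x - c) s x := fun x hx => by
    simpa using (hf x hx).fun_sub ((hasDerivWithinAt_id x s).smul_const c)
  have := hs.norm_image_sub_le_of_norm_hasDerivWithin_le hg bound hx hy
  rw [Real.norm_eq_abs] at this
  convert this using 2
  module

theorem differentiableAt_of_cauchy_slope {𝕜 E : Type*} [NontriviallyNormedField 𝕜]
    [NormedAddCommGroup E] [NormedSpace 𝕜 E] [CompleteSpace E] {f : 𝕜 → E} {x : 𝕜}
    (h : Cauchy (map (slope f x) (𝓝[≠] x))) : DifferentiableAt 𝕜 f x :=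
  let ⟨_, hL⟩ := CompleteSpace.complete h
  (hasDerivAt_iff_tendsto_slope.2 hL).differentiableAt

theorem lt_of_sq_le_mul_div {t a M ε : ℝ} (ha : 0 ≤ a) (haM : a ≤ M) (hε : 0 < ε)
    (h : t ^ 2 ≤ a * (ε ^ 2 / (M + 1))) : t < ε := by
  have hM : 0 < M + 1 := by linarith
  refine lt_of_pow_lt_pow_left₀ 2 hε.le (h.trans_lt ?_)
  rw [← mul_div_assoc, div_lt_iff₀ hM]
  nlinarith [mul_pos hε hε]

def PosDefOn {α : Type*} (Ω : Set α) (k : α × α → ℂ) : Prop :=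
  ∀ (n : ℕ) (x : Fin n → α), (∀ i, x i ∈ Ω) → ∀ ξ : Fin n → ℂ,
    0 ≤ ∑ i, ∑ j, k (x i, x j) * ξ i * conj (ξ j)

namespace PosDefOn

variable {α : Type*} {Ω : Set α} {k : α × α → ℂ}

theorem sum_nonneg (hk : PosDefOn Ω k) {ι : Type*} [Fintype ι] {x : ι → α} (hx : ∀ i, x i ∈ Ω)
    (ξ : ι → ℂ) : 0 ≤ ∑ i, ∑ j, k (x i, x j) * ξ i * conj (ξ j) := by
  let e := (Fintype.equivFin ι).symm
  convert hk _ (x ∘ e) (fun i => hx (e i)) (ξ ∘ e) using 1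
  exact (Fintype.sum_equiv e _ _ fun i =>
    Fintype.sum_equiv e _ (fun j => k (x (e i), x j) * ξ (e i) * conj (ξ j)) fun j => rfl).symm

theorem apply_self_nonneg (hk : PosDefOn Ω k) {a : α} (ha : a ∈ Ω) : 0 ≤ k (a, a) := by
  simpa using hk 1 ![a] (by simpa) ![1]

theorem apply_swap (hk : PosDefOn Ω k) {a b : α} (ha : a ∈ Ω) (hb : b ∈ Ω) :
    k (b, a) = conj (k (a, b)) := by
  have hx : ∀ i, ![a, b] i ∈ Ω := by simp [Fin.forall_fin_two, ha, hb]
  have h₁ := Complex.nonneg_iff.1 (hk 2 ![a, b] hx ![1, 1])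
  have h₂ := Complex.nonneg_iff.1 (hk 2 ![a, b] hx ![1, Complex.I])
  have haa := Complex.nonneg_iff.1 (hk.apply_self_nonneg ha)
  have hbb := Complex.nonneg_iff.1 (hk.apply_self_nonneg hb)
  simp only [Fin.sum_univ_two, Matrix.cons_val_zero, Matrix.cons_val_one, Matrix.cons_val_fin_one,
    map_one, mul_one, Complex.conj_I, mul_neg, Complex.add_re, Complex.add_im, Complex.neg_re,
    Complex.neg_im, Complex.mul_re, Complex.mul_im, Complex.I_re, Complex.I_im, mul_zero, zero_sub,
    neg_neg, add_zero] at h₁ h₂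
  apply Complex.ext <;> simp only [Complex.conj_re, Complex.conj_im] <;> linarith

theorem norm_sq_sum_le (hk : PosDefOn Ω k) {u : α} (hu : u ∈ Ω) {ι : Type*} [Fintype ι]
    {y : ι → α} (hy : ∀ i, y i ∈ Ω) (ξ : ι → ℂ) :
    ‖∑ j, k (u, y j) * conj (ξ j)‖ ^ 2
      ≤ (k (u, u)).re * (∑ i, ∑ j, k (y i, y j) * ξ i * conj (ξ j)).re := by
  generalize hS : ∑ j, k (u, y j) * conj (ξ j) = S
  generalize hQ : ∑ i, ∑ j, k (y i, y j) * ξ i * conj (ξ j) = Q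
  have ha : 0 ≤ (k (u, u)).re := (Complex.nonneg_iff.1 (hk.apply_self_nonneg hu)).1
  have hQ₀ : 0 ≤ Q.re := (Complex.nonneg_iff.1 (hQ ▸ hk.sum_nonneg hy ξ)).1
  have hquad : ∀ r : ℝ,
      0 ≤ (k (u, u)).re * ‖S‖ ^ 2 * (r * r) + 2 * ‖S‖ ^ 2 * r + Q.re := by
    intro r
    generalize ht : (r : ℂ) * conj S = t
    have hS₁ : ∑ j, k (u, y j) * t * conj (ξ j) = t * S := by
      rw [← hS, Finset.mul_sum]; exact Finset.sum_congr rfl fun j _ => by ring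
    have hS₂ : ∑ i, k (y i, u) * ξ i * conj t = conj (t * S) := by
      rw [← hS, map_mul, map_sum, Finset.mul_sum]
      refine Finset.sum_congr rfl fun i _ => ?_
      rw [hk.apply_swap hu (hy i), map_mul, Complex.conj_conj]
      ring
    have h := hk.sum_nonneg (x := fun i : Option ι => i.elim u y)
      (by rintro (_ | i) <;> simp [hu, hy]) (fun i => i.elim t ξ)
    simp only [Fintype.sum_option, Option.elim_none, Option.elim_some, Finset.sum_add_distrib,
      hS₁, hS₂, hQ] at h
    have htt : t * conj t = ((r * r * ‖S‖ ^ 2 : ℝ) : ℂ) := by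
      rw [Complex.mul_conj, Complex.normSq_eq_norm_sq, ← ht, norm_mul, Complex.norm_conj,
        Complex.norm_real, Real.norm_eq_abs, mul_pow, sq_abs]
      push_cast; ring
    have htS : t * S = ((r * ‖S‖ ^ 2 : ℝ) : ℂ) := by
      rw [← ht, mul_assoc, Complex.conj_mul', Complex.ofReal_mul]; push_cast; ring
    rw [mul_assoc, htt, htS, Complex.conj_ofReal] at h
    have := (Complex.nonneg_iff.1 h).1
    simp only [Complex.add_re, Complex.re_mul_ofReal, Complex.ofReal_re] at this
    linarith
  have hdisc := discrim_le_zero hquad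
  unfold discrim at hdisc
  by_contra! h
  have hS₀ : 0 < ‖S‖ ^ 2 := (mul_nonneg ha hQ₀).trans_lt h
  nlinarith [mul_pos hS₀ (sub_pos.2 h)]

end PosDefOn

noncomputable def mixedDivDiff (k : ℝ × ℝ → ℂ) (x x' y y' : ℝ) : ℂ :=
  (k (x', y') - k (x', y) - k (x, y') + k (x, y)) / (((x' - x) * (y' - y) : ℝ) : ℂ)

theorem norm_mixedDivDiff_sub_le {k : ℝ × ℝ → ℂ} {I J : Set ℝ} (hI : Convex ℝ I)
    (hJ : Convex ℝ J) (h₁ : ∀ x ∈ I, ∀ y ∈ J, DifferentiableAt ℝ (fun x => k (x, y)) x)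
    (h₂ : ∀ x ∈ I, ∀ y ∈ J, DifferentiableAt ℝ (fun y => pderiv1 k (x, y)) y) {c : ℂ} {ε : ℝ}
    (hc : ∀ x ∈ I, ∀ y ∈ J, ‖pderiv2 (pderiv1 k) (x, y) - c‖ ≤ ε)
    {x x' y y' : ℝ} (hx : x ∈ I) (hx' : x' ∈ I) (hy : y ∈ J) (hy' : y' ∈ J)
    (hxx' : x ≠ x') (hyy' : y ≠ y') : ‖mixedDivDiff k x x' y y' - c‖ ≤ ε := by
  have hinner : ∀ x ∈ I, ‖pderiv1 k (x, y') - pderiv1 k (x, y) - (y' - y) • c‖ ≤ ε * |y' - y| :=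
    fun x hx => hJ.norm_image_sub_sub_smul_le
      (fun y hy => (h₂ x hx y hy).hasDerivAt.hasDerivWithinAt) (hc x hx) hy hy'
  have houter := hI.norm_image_sub_sub_smul_le (f := fun x => k (x, y') - k (x, y))
    (fun x hx => ((h₁ x hx y' hy').hasDerivAt.sub (h₁ x hx y hy).hasDerivAt).hasDerivWithinAt)
    hinner hx hx'
  have hne : (x' - x) * (y' - y) ≠ 0 :=
    mul_ne_zero (sub_ne_zero.2 hxx'.symm) (sub_ne_zero.2 hyy'.symm)
  have hpos : 0 < |(x' - x) * (y' - y)| := abs_pos.2 hne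
  have hC : (((x' - x) * (y' - y) : ℝ) : ℂ) ≠ 0 := by exact_mod_cast hne
  calc ‖mixedDivDiff k x x' y y' - c‖
      = ‖k (x', y') - k (x', y) - (k (x, y') - k (x, y)) - (x' - x) • (y' - y) • c‖
          / |(x' - x) * (y' - y)| := by
        rw [eq_div_iff hpos.ne', ← Real.norm_eq_abs, ← Complex.norm_real, ← norm_mul, sub_mul,
          mixedDivDiff, div_mul_cancel₀ _ hC, smul_smul, Complex.real_smul]
        ring_nf
    _ ≤ ε := by
        rw [div_le_iff₀ hpos, abs_mul]
        linarith

noncomputable def slopeDiffWeights (v v' w w' : ℝ) : Fin 4 → ℂ :=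
  ![((v' : ℂ) - v)⁻¹, -((v' : ℂ) - v)⁻¹, -((w' : ℂ) - w)⁻¹, ((w' : ℂ) - w)⁻¹]

theorem sum_mul_conj_slopeDiffWeights (k : ℝ × ℝ → ℂ) (u v v' w w' : ℝ) :
    ∑ j, k (u, ![v', v, w', w] j) * conj (slopeDiffWeights v v' w w' j)
      = slope (fun t => k (u, t)) v v' - slope (fun t => k (u, t)) w w' := by
  simp only [slopeDiffWeights, Fin.sum_univ_four, Matrix.cons_val, map_neg, map_inv₀, map_sub,
    Complex.conj_ofReal, slope, vsub_eq_sub, Complex.real_smul, Complex.ofReal_inv,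
    Complex.ofReal_sub]
  ring

theorem sum_sum_mul_slopeDiffWeights (k : ℝ × ℝ → ℂ) (v v' w w' : ℝ) :
    ∑ i, ∑ j, k (![v', v, w', w] i, ![v', v, w', w] j) * slopeDiffWeights v v' w w' i
        * conj (slopeDiffWeights v v' w w' j)
      = mixedDivDiff k v v' v v' - mixedDivDiff k v v' w w' - mixedDivDiff k w w' v v'
        + mixedDivDiff k w w' w w' := by
  simp only [slopeDiffWeights, Fin.sum_univ_four, Matrix.cons_val, map_neg, map_inv₀, map_sub,
    Complex.conj_ofReal, mixedDivDiff, Complex.ofReal_mul, Complex.ofReal_sub, div_eq_mul_inv,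
    mul_inv_rev]
  ring

def MixedDivDiffConvergesOnDiag (Ω : Set ℝ) (k : ℝ × ℝ → ℂ) : Prop :=
  ∀ v₀ ∈ Ω, ∃ c : ℂ, ∀ ε > 0, ∃ δ > 0, ∀ x ∈ ball v₀ δ, ∀ x' ∈ ball v₀ δ, ∀ y ∈ ball v₀ δ,
    ∀ y' ∈ ball v₀ δ, x ≠ x' → y ≠ y' → ‖mixedDivDiff k x x' y y' - c‖ ≤ ε

namespace IsClassSn

variable {U : Set (ℝ × ℝ)} {k : ℝ × ℝ → ℂ}

theorem continuousOn {n : ℕ} (hs : IsClassSn n U k) : ContinuousOn k U := by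
  simpa using hs.2.2 0 n.zero_le 0 n.zero_le

theorem exists_norm_mixedDivDiff_sub_le (hs : IsClassSn 1 U k) (hU : IsOpen U) {p : ℝ × ℝ}
    (hp : p ∈ U) {ε : ℝ} (hε : 0 < ε) :
    ∃ δ > 0, ∀ x ∈ ball p.1 δ, ∀ x' ∈ ball p.1 δ, ∀ y ∈ ball p.2 δ, ∀ y' ∈ ball p.2 δ,
      x ≠ x' → y ≠ y' → ‖mixedDivDiff k x x' y y' - pderiv2 (pderiv1 k) p‖ ≤ ε := by
  have h₁ : ∀ q ∈ U, DifferentiableAt ℝ (fun x => k (x, q.2)) q.1 := fun q hq => by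
    simpa using hs.1 0 one_pos q hq
  have h₂ : ∀ q ∈ U, DifferentiableAt ℝ (fun y => pderiv1 k (q.1, y)) q.2 := fun q hq => by
    simpa using hs.2.1 1 le_rfl 0 one_pos q hq
  have h₃ : ContinuousOn (pderiv2 (pderiv1 k)) U := by simpa using hs.2.2 1 le_rfl 1 le_rfl
  obtain ⟨δ, hδ, hnear⟩ := Metric.eventually_nhds_iff.1 <| (hU.eventually_mem hp).and <|
    Metric.tendsto_nhds.1 (h₃.continuousAt (hU.mem_nhds hp)) ε hε
  have hbox : ∀ x ∈ ball p.1 δ, ∀ y ∈ ball p.2 δ,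
      (x, y) ∈ U ∧ ‖pderiv2 (pderiv1 k) (x, y) - pderiv2 (pderiv1 k) p‖ < ε := fun x hx y hy => by
    rw [← dist_eq_norm]
    exact hnear (by rw [Prod.dist_eq]; exact max_lt hx hy)
  exact ⟨δ, hδ, fun x hx x' hx' y hy y' hy' => norm_mixedDivDiff_sub_le (convex_ball _ _)
    (convex_ball _ _) (fun x hx y hy => h₁ _ (hbox x hx y hy).1)
    (fun x hx y hy => h₂ _ (hbox x hx y hy).1) (fun x hx y hy => (hbox x hx y hy).2.le)
    hx hx' hy hy'⟩

theorem mixedDivDiffConvergesOnDiag (hs : IsClassSn 1 U k) (hU : IsOpen U) {Ω : Set ℝ}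
    (hdiag : ∀ x ∈ Ω, (x, x) ∈ U) : MixedDivDiffConvergesOnDiag Ω k :=
  fun v₀ hv₀ => ⟨_, fun _ hε => hs.exists_norm_mixedDivDiff_sub_le hU (hdiag v₀ hv₀) hε⟩

end IsClassSn

namespace PosDefOn

variable {Ω : Set ℝ} {k : ℝ × ℝ → ℂ}

theorem norm_sq_slope_sub_slope_le (hk : PosDefOn Ω k) (hΩ : IsOpen Ω)
    (hmix : MixedDivDiffConvergesOnDiag Ω k) {v₀ : ℝ} (hv₀ : v₀ ∈ Ω) {ε : ℝ} (hε : 0 < ε) :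
    ∃ η > 0, ball v₀ η ⊆ Ω ∧ ∀ u ∈ Ω, ∀ v ∈ ball v₀ η, ∀ v' ∈ ball v₀ η, ∀ w ∈ ball v₀ η,
      ∀ w' ∈ ball v₀ η, v ≠ v' → w ≠ w' →
      ‖slope (fun t => k (u, t)) v v' - slope (fun t => k (u, t)) w w'‖ ^ 2
        ≤ (k (u, u)).re * ε := by
  obtain ⟨c, hc⟩ := hmix v₀ hv₀
  obtain ⟨δ, hδ, hδc⟩ := hc (ε / 4) (by positivity)
  obtain ⟨r, hr, hrΩ⟩ := Metric.isOpen_iff.1 hΩ v₀ hv₀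
  have hsub : ∀ x ∈ ball v₀ (min δ r), x ∈ ball v₀ δ ∧ x ∈ Ω := fun x hx =>
    ⟨ball_subset_ball (min_le_left _ _) hx, hrΩ (ball_subset_ball (min_le_right _ _) hx)⟩
  refine ⟨min δ r, lt_min hδ hr, fun x hx => (hsub x hx).2, ?_⟩
  intro u hu v hv v' hv' w hw w' hw' hvv' hww'
  have hy : ∀ i, ![v', v, w', w] i ∈ Ω := by
    simp [Fin.forall_fin_succ, (hsub _ hv).2, (hsub _ hv').2, (hsub _ hw).2, (hsub _ hw').2]
  have hb := fun x hx x' hx' y hy y' hy' =>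
    hδc x (hsub x hx).1 x' (hsub x' hx').1 y (hsub y hy).1 y' (hsub y' hy').1
  have hQε : (∑ i, ∑ j, k (![v', v, w', w] i, ![v', v, w', w] j) * slopeDiffWeights v v' w w' i
      * conj (slopeDiffWeights v v' w w' j)).re ≤ ε := by
    rw [sum_sum_mul_slopeDiffWeights,
      show ∀ a b d e : ℂ, a - b - d + e = (a - c) - (b - c) - (d - c) + (e - c) by intros; ring]
    refine (Complex.re_le_norm _).trans <| (norm_add_le_of_le (norm_sub_le_of_le
      (norm_sub_le_of_le (hb v hv v' hv' v hv v' hv' hvv' hvv')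
        (hb v hv v' hv' w hw w' hw' hvv' hww')) (hb w hw w' hw' v hv v' hv' hww' hvv'))
      (hb w hw w' hw' w hw w' hw' hww' hww')).trans_eq ?_
    ring
  have ha : 0 ≤ (k (u, u)).re := (Complex.nonneg_iff.1 (hk.apply_self_nonneg hu)).1
  rw [← sum_mul_conj_slopeDiffWeights]
  exact (hk.norm_sq_sum_le hu hy _).trans (mul_le_mul_of_nonneg_left hQε ha)

theorem hasDerivAt_pderiv2 (hk : PosDefOn Ω k) (hΩ : IsOpen Ω)
    (hmix : MixedDivDiffConvergesOnDiag Ω k) {u v : ℝ} (hu : u ∈ Ω) (hv : v ∈ Ω) :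
    HasDerivAt (fun t => k (u, t)) (pderiv2 k (u, v)) v := by
  suffices h : DifferentiableAt ℝ (fun t => k (u, t)) v from h.hasDerivAt
  refine differentiableAt_of_cauchy_slope (Metric.cauchy_iff.2 ⟨inferInstance, fun ε hε => ?_⟩)
  have ha : 0 ≤ (k (u, u)).re := (Complex.nonneg_iff.1 (hk.apply_self_nonneg hu)).1
  obtain ⟨η, hη, -, hbound⟩ :=
    hk.norm_sq_slope_sub_slope_le hΩ hmix hv (ε := ε ^ 2 / ((k (u, u)).re + 1)) (by positivity)
  refine ⟨slope _ v '' (ball v η \ {v}),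
    image_mem_map (sdiff_mem_nhdsWithin_compl (ball_mem_nhds v hη) _), ?_⟩
  rintro _ ⟨t, ⟨ht, htv⟩, rfl⟩ _ ⟨t', ⟨ht', ht'v⟩, rfl⟩
  rw [dist_eq_norm]
  exact lt_of_sq_le_mul_div ha le_rfl hε <| hbound u hu v (mem_ball_self hη) t ht
    v (mem_ball_self hη) t' ht' (Ne.symm htv) (Ne.symm ht'v)

theorem norm_sq_pderiv2_sub_le (hk : PosDefOn Ω k) (hΩ : IsOpen Ω)
    (hmix : MixedDivDiffConvergesOnDiag Ω k) {v₀ : ℝ} (hv₀ : v₀ ∈ Ω) {ε : ℝ} (hε : 0 < ε) :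
    ∃ η > 0, ∀ u ∈ Ω, ∀ v ∈ ball v₀ η, ∀ w ∈ ball v₀ η,
      ‖pderiv2 k (u, v) - pderiv2 k (u, w)‖ ^ 2 ≤ (k (u, u)).re * ε := by
  obtain ⟨η, hη, hηΩ, hbound⟩ := hk.norm_sq_slope_sub_slope_le hΩ hmix hv₀ hε
  refine ⟨η, hη, fun u hu v hv w hw => ?_⟩
  have hslope : ∀ x ∈ ball v₀ η,
      Tendsto (slope (fun t => k (u, t)) x) (𝓝[≠] x) (𝓝 (pderiv2 k (u, x))) := fun x hx =>
    hasDerivAt_iff_tendsto_slope.1 (hk.hasDerivAt_pderiv2 hΩ hmix hu (hηΩ hx))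
  have hnear : ∀ x ∈ ball v₀ η, ∀ᶠ t in 𝓝[≠] x, t ∈ ball v₀ η ∧ x ≠ t := fun x hx =>
    (eventually_nhdsWithin_of_eventually_nhds (isOpen_ball.mem_nhds hx)).and
      (eventually_mem_nhdsWithin.mono fun _ ht => Ne.symm ht)
  refine le_of_tendsto
    ((((hslope v hv).comp tendsto_fst).sub ((hslope w hw).comp tendsto_snd)).norm.pow 2) ?_
  filter_upwards [(hnear v hv).prod_mk (hnear w hw)] with p hp
  exact hbound u hu v hv p.1 hp.1.1 w hw p.2 hp.2.1 hp.1.2 hp.2.2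

theorem continuousOn_pderiv2 (hk : PosDefOn Ω k) (hΩ : IsOpen Ω)
    (hmix : MixedDivDiffConvergesOnDiag Ω k) {u : ℝ} (hu : u ∈ Ω) :
    ContinuousOn (fun v => pderiv2 k (u, v)) Ω := by
  intro v₀ hv₀
  refine (Metric.continuousAt_iff.2 fun ε hε => ?_).continuousWithinAt
  have ha : 0 ≤ (k (u, u)).re := (Complex.nonneg_iff.1 (hk.apply_self_nonneg hu)).1
  obtain ⟨η, hη, hbound⟩ :=
    hk.norm_sq_pderiv2_sub_le hΩ hmix hv₀ (ε := ε ^ 2 / ((k (u, u)).re + 1)) (by positivity)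
  refine ⟨η, hη, fun v hv => ?_⟩
  rw [dist_eq_norm]
  exact lt_of_sq_le_mul_div ha le_rfl hε (hbound u hu v hv v₀ (mem_ball_self hη))

theorem exists_equicontinuous_pderiv2 (hk : PosDefOn Ω k) (hΩ : IsOpen Ω)
    (hmix : MixedDivDiffConvergesOnDiag Ω k) (hcont : ContinuousOn (fun u => k (u, u)) Ω)
    {u₀ : ℝ} (hu₀ : u₀ ∈ Ω) :
    ∃ V ⊆ Ω, V ∈ 𝓝[Ω] u₀ ∧ Equicontinuous fun (u : V) (v : Ω) => pderiv2 k (↑u, ↑v) := by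
  set M := (k (u₀, u₀)).re + 1
  have hM : ∀ᶠ u in 𝓝[Ω] u₀, (k (u, u)).re < M :=
    (Complex.continuous_re.continuousAt.comp_continuousWithinAt (hcont u₀ hu₀)).eventually_lt_const
      (lt_add_one _)
  refine ⟨Ω ∩ {u | (k (u, u)).re < M}, Set.inter_subset_left,
    Filter.inter_mem self_mem_nhdsWithin hM, fun v₀ => ?_⟩
  rw [Metric.equicontinuousAt_iff_right]
  intro ε hε
  have hM₀ : 0 ≤ M := by
    linarith [(Complex.nonneg_iff.1 (hk.apply_self_nonneg hu₀)).1]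
  obtain ⟨η, hη, hbound⟩ :=
    hk.norm_sq_pderiv2_sub_le hΩ hmix v₀.2 (ε := ε ^ 2 / (M + 1)) (by positivity)
  filter_upwards [ball_mem_nhds v₀ hη] with v hv u
  rw [dist_eq_norm]
  exact lt_of_sq_le_mul_div (Complex.nonneg_iff.1 (hk.apply_self_nonneg u.2.1)).1
    u.2.2.le hε (hbound u u.2.1 v₀ (mem_ball_self hη) v hv)

theorem pderiv1_eq_conj_pderiv2 (hk : PosDefOn Ω k) (hΩ : IsOpen Ω) {u v : ℝ} (hu : u ∈ Ω)
    (hv : v ∈ Ω) : pderiv1 k (u, v) = conj (pderiv2 k (v, u)) := by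
  have hswap : (fun t => k (t, v)) =ᶠ[𝓝 u] fun t => star (k (v, t)) :=
    Filter.eventually_of_mem (hΩ.mem_nhds hu) fun t ht => hk.apply_swap hv ht
  exact (hswap.deriv_eq).trans deriv.star

end PosDefOn

theorem stmt13_general (Ω : Set ℝ) (hΩ : IsOpen Ω) (k : ℝ × ℝ → ℂ)
    (hpd : ∀ (n : ℕ) (x : Fin n → ℝ), (∀ i, x i ∈ Ω) → ∀ ξ : Fin n → ℂ,
      0 ≤ ∑ i, ∑ j, k (x i, x j) * ξ i * (starRingEnd ℂ) (ξ j))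
    (U : Set (ℝ × ℝ)) (hUopen : IsOpen U)
    (hdiag : ∀ x ∈ Ω, (x, x) ∈ U)
    (hs : IsClassSn 1 U k) :
    (∀ u ∈ Ω, ContinuousOn (fun v => pderiv2 k (u, v)) Ω) ∧
    (∀ v ∈ Ω, ContinuousOn (fun u => pderiv1 k (u, v)) Ω) ∧
    (∀ u₀ ∈ Ω, ∃ V : Set ℝ, V ⊆ Ω ∧ V ∈ 𝓝[Ω] u₀ ∧
      Equicontinuous fun (u : V) (v : Ω) => pderiv2 k (↑u, ↑v)) ∧
    (∀ v₀ ∈ Ω, ∃ W : Set ℝ, W ⊆ Ω ∧ W ∈ 𝓝[Ω] v₀ ∧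
      Equicontinuous fun (v : W) (u : Ω) => pderiv1 k (↑u, ↑v)) := by
  have hk : PosDefOn Ω k := hpd
  have hmix := hs.mixedDivDiffConvergesOnDiag hUopen hdiag
  have hcont : ContinuousOn (fun u => k (u, u)) Ω :=
    hs.continuousOn.comp (continuous_id.prodMk continuous_id).continuousOn hdiag
  have hequi := fun u₀ (hu₀ : u₀ ∈ Ω) => hk.exists_equicontinuous_pderiv2 hΩ hmix hcont hu₀
  refine ⟨fun u hu => hk.continuousOn_pderiv2 hΩ hmix hu, fun v hv => ?_, hequi,
    fun v₀ hv₀ => ?_⟩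
  · exact (Complex.continuous_conj.comp_continuousOn (hk.continuousOn_pderiv2 hΩ hmix hv)).congr
      fun u hu => hk.pderiv1_eq_conj_pderiv2 hΩ hu hv
  · obtain ⟨W, hWΩ, hW, hWequi⟩ := hequi v₀ hv₀
    refine ⟨W, hWΩ, hW, ?_⟩
    have hconj : (fun (v : W) (u : Ω) => pderiv1 k (↑u, ↑v))
        = (conj ∘ ·) ∘ fun (v : W) (u : Ω) => pderiv2 k (↑v, ↑u) := by
      funext v u
      exact hk.pderiv1_eq_conj_pderiv2 hΩ u.2 (hWΩ v.2)
    rw [hconj]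
    exact Complex.isometry_conj.isUniformInducing.equicontinuous_iff.1 hWequi

/-- For a positive definite kernel `k` of class `S₁` on an open
neighborhood of the diagonal of an open `Ω ⊆ ℝ`: (1) each partial derivative is
separately continuous on `Ω`; and moreover (2) near any point the corresponding family of
partial-derivative sections is equicontinuous on `Ω`. -/
theorem stmt13 (Ω : Set ℝ) (hΩ : IsOpen Ω) (k : ℝ × ℝ → ℂ)
    (hpd : ∀ (n : ℕ) (x : Fin n → ℝ), (∀ i, x i ∈ Ω) → ∀ ξ : Fin n → ℂ,
      0 ≤ ∑ i, ∑ j, k (x i, x j) * ξ i * (starRingEnd ℂ) (ξ j))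
    (U : Set (ℝ × ℝ)) (hUopen : IsOpen U)
    (hdiag : ∀ x ∈ Ω, (x, x) ∈ U) (hUsub : U ⊆ Ω ×ˢ Ω)
    (hs : IsClassSn 1 U k) :
    (∀ u ∈ Ω, ContinuousOn (fun v => pderiv2 k (u, v)) Ω) ∧
    (∀ v ∈ Ω, ContinuousOn (fun u => pderiv1 k (u, v)) Ω) ∧
    (∀ u₀ ∈ Ω, ∃ V : Set ℝ, V ⊆ Ω ∧ V ∈ 𝓝[Ω] u₀ ∧
      Equicontinuous fun (u : V) (v : Ω) => pderiv2 k (↑u, ↑v)) ∧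
    (∀ v₀ ∈ Ω, ∃ W : Set ℝ, W ⊆ Ω ∧ W ∈ 𝓝[Ω] v₀ ∧
      Equicontinuous fun (v : W) (u : Ω) => pderiv1 k (↑u, ↑v)) :=
  stmt13_general Ω hΩ k hpd U hUopen hdiag hs
end

section
/- Let Ω ⊆ ℝ be open and let k : Ω × Ω → ℂ be a positive definite kernel of class S₁(U) on some open set U ⊆ ℝ² with D(Ω²) ⊆ U ⊆ Ω × Ω. Then the second-order mixed partial derivatives ∂²k/∂v∂u (u,v) and ∂²k/∂u∂v (u,v) exist in ℂ for all (u,v) ∈ Ω × Ω. -/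
/-!
By Moore's theorem (`RKHS.OfKernel`) a positive definite kernel is a Gram kernel:
`k (p, q) = ⟪Φ p, Φ q⟫` for a map `Φ` of `Ω` into a Hilbert space. The inner products of the
difference quotients of `Φ` at `x` are second difference quotients of `k` at `(x, x)`, which
converge to `∂²k/∂v∂u (x, x)` by the `S₁` regularity near the diagonal. Hence the difference
quotients of `Φ` are Cauchy, `Φ` is differentiable on `Ω`, and `k (u, v) = ⟪Φ u, Φ v⟫` has both
mixed second partial derivatives at every point of `Ω × Ω`.
-/

open Filter Topology ComplexOrder

open ComplexConjugate InnerProductSpace Set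

/-- The kernel `k` on `Ω` as a matrix of scalar operators on `ℂ`, the shape of kernel that
`RKHS.OfKernel` takes. -/
noncomputable def kernelMatrix (Ω : Set ℝ) (k : ℝ × ℝ → ℂ) : Matrix Ω Ω (ℂ →L[ℂ] ℂ) :=
  Matrix.of fun x y => k (x, y) • 1

section PositiveDefinite

variable {Ω : Set ℝ} {k : ℝ × ℝ → ℂ}
  (hpd : ∀ (n : ℕ) (x : Fin n → ℝ), (∀ i, x i ∈ Ω) → ∀ ξ : Fin n → ℂ,
    0 ≤ ∑ i, ∑ j, k (x i, x j) * ξ i * conj (ξ j))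
include hpd

theorem sum_sum_nonneg_of_posDef {ι : Type*} [Fintype ι] (x : ι → ℝ) (hx : ∀ i, x i ∈ Ω)
    (ξ : ι → ℂ) : 0 ≤ ∑ i, ∑ j, k (x i, x j) * ξ i * conj (ξ j) := by
  let e := Fintype.equivFin ι
  simpa [← e.symm.sum_comp] using hpd _ (x ∘ e.symm) (fun i => hx _) (ξ ∘ e.symm)

theorem kernel_swap_eq_conj {p q : ℝ} (hp : p ∈ Ω) (hq : q ∈ Ω) :
    k (q, p) = conj (k (p, q)) := by
  -- `ξ = (1, 0), (0, 1)` make the diagonal real; `ξ = (1, 1), (1, i)` then polarize.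
  have h := fun ξ : Fin 2 → ℂ => hpd 2 ![p, q] (by simp [Fin.forall_fin_two, hp, hq]) ξ
  have hp' := Complex.nonneg_iff.1 (h ![1, 0])
  have hq' := Complex.nonneg_iff.1 (h ![0, 1])
  have h₁ := Complex.nonneg_iff.1 (h ![1, 1])
  have h₂ := Complex.nonneg_iff.1 (h ![1, Complex.I])
  simp only [Fin.sum_univ_two, Fin.isValue, Matrix.cons_val_zero, map_one, mul_one,
    Matrix.cons_val_one, Matrix.cons_val_fin_one, map_zero, mul_zero, add_zero, zero_add,
    Complex.add_re, Complex.add_im, Complex.conj_I, mul_neg, Complex.neg_re, Complex.mul_re,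
    Complex.I_re, Complex.I_im, zero_sub, neg_neg, Complex.mul_im, Complex.neg_im] at hp' hq' h₁ h₂
  apply Complex.ext <;> simp <;> linarith

theorem posSemidef_kernelMatrix : (kernelMatrix Ω k).PosSemidef := by
  apply ((RKHS.posSemidef_tfae (𝕜 := ℂ) (V := ℂ) (K := kernelMatrix Ω k)).out 2 0).1
  refine ⟨?_, fun v => ?_⟩
  · ext x y : 1
    simp [kernelMatrix, kernel_swap_eq_conj hpd y.2 x.2]
  · have h := sum_sum_nonneg_of_posDef hpd (fun x : v.support => (x : ℝ)) (fun x => x.1.2)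
      (fun x => conj (v x))
    refine (Complex.nonneg_iff.1 h).1.trans_eq (congrArg Complex.re ?_)
    simp_rw [Finsupp.sum, ← Finset.sum_coe_sort v.support]
    refine Finset.sum_congr rfl fun x _ => Finset.sum_congr rfl fun y _ => ?_
    simp only [kernelMatrix, Matrix.of_apply, kernel_swap_eq_conj hpd x.1.2 y.1.2,
      smul_apply, one_apply_eq_self, smul_eq_mul,
      RCLike.inner_apply, map_mul, Complex.conj_conj]
    ring

theorem exists_kernel_eq_inner : ∃ (H : Type) (_ : NormedAddCommGroup H)
    (_ : InnerProductSpace ℂ H) (_ : CompleteSpace H) (Φ : ℝ → H),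
    ∀ p ∈ Ω, ∀ q ∈ Ω, k (p, q) = ⟪Φ p, Φ q⟫_ℂ := by
  classical
  have : Fact (kernelMatrix Ω k).PosSemidef := ⟨posSemidef_kernelMatrix hpd⟩
  refine ⟨RKHS.OfKernel (kernelMatrix Ω k), inferInstance, inferInstance, inferInstance,
    fun t => if h : t ∈ Ω then RKHS.kerFun (RKHS.OfKernel (kernelMatrix Ω k)) ⟨t, h⟩ 1 else 0,
    fun p hp q hq => ?_⟩
  have h := RKHS.kernel_inner (H := RKHS.OfKernel (kernelMatrix Ω k)) ⟨q, hq⟩ ⟨p, hp⟩ 1 1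
  rw [RKHS.OfKernel.kernel_ofKernel] at h
  simp only [hp, hq, dite_true, ← h]
  simp [kernelMatrix, kernel_swap_eq_conj hpd hq hp]

end PositiveDefinite

section Calculus

variable {k : ℝ × ℝ → ℂ}

theorem norm_rectangle_sub_le {x x' y y' : ℝ} {c : ℂ} {ε : ℝ}
    (h₁ : ∀ p ∈ uIcc x x' ×ˢ uIcc y y', DifferentiableAt ℝ (fun u => k (u, p.2)) p.1)
    (h₂ : ∀ p ∈ uIcc x x' ×ˢ uIcc y y', DifferentiableAt ℝ (fun v => pderiv1 k (p.1, v)) p.2)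
    (hm : ∀ p ∈ uIcc x x' ×ˢ uIcc y y', ‖pderiv2 (pderiv1 k) p - c‖ ≤ ε) :
    ‖k (x', y') - k (x', y) - k (x, y') + k (x, y) - ((x' - x) * (y' - y)) • c‖
      ≤ ε * |x' - x| * |y' - y| := by
  have hinner : ∀ u ∈ uIcc x x',
      ‖pderiv1 k (u, y') - pderiv1 k (u, y) - (y' - y) • c‖ ≤ ε * |y' - y| := by
    intro u hu
    have hder : ∀ t ∈ uIcc y y', HasDerivWithinAt (fun t : ℝ => pderiv1 k (u, t) - t • c)
        (pderiv2 (pderiv1 k) (u, t) - c) (uIcc y y') t := fun t ht =>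
      ((h₂ (u, t) ⟨hu, ht⟩).hasDerivAt.sub ((hasDerivAt_id' t).smul_const c)).hasDerivWithinAt
        |>.congr_deriv (by rw [one_smul]; rfl)
    have := (convex_uIcc y y').norm_image_sub_le_of_norm_hasDerivWithin_le hder
      (fun t ht => hm (u, t) ⟨hu, ht⟩) left_mem_uIcc right_mem_uIcc
    rwa [sub_sub_sub_comm, ← sub_smul, Real.norm_eq_abs] at this
  have hder : ∀ u ∈ uIcc x x',
      HasDerivWithinAt (fun u : ℝ => k (u, y') - k (u, y) - u • ((y' - y) • c))
        (pderiv1 k (u, y') - pderiv1 k (u, y) - (y' - y) • c) (uIcc x x') u := fun u hu =>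
    ((h₁ (u, y') ⟨hu, right_mem_uIcc⟩).hasDerivAt.sub (h₁ (u, y) ⟨hu, left_mem_uIcc⟩).hasDerivAt
      |>.sub ((hasDerivAt_id' u).smul_const ((y' - y) • c))).hasDerivWithinAt
      |>.congr_deriv (by rw [one_smul]; rfl)
  have := (convex_uIcc x x').norm_image_sub_le_of_norm_hasDerivWithin_le hder hinner
    left_mem_uIcc right_mem_uIcc
  rwa [Real.norm_eq_abs, mul_right_comm, show k (x', y') - k (x', y) - x' • (y' - y) • c
    - (k (x, y') - k (x, y) - x • (y' - y) • c)
    = k (x', y') - k (x', y) - k (x, y') + k (x, y) - ((x' - x) * (y' - y)) • c by module] at this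

theorem Real.uIcc_subset_ball {x u δ : ℝ} (hδ : 0 < δ) (hu : u ∈ Metric.ball x δ) :
    uIcc x u ⊆ Metric.ball x δ := by
  rw [← segment_eq_uIcc]
  exact (convex_ball x δ).segment_subset (Metric.mem_ball_self hδ) hu

theorem tendsto_rectangle_quotient {U : Set (ℝ × ℝ)} {x y : ℝ} (hU : U ∈ 𝓝 (x, y))
    (hs : IsClassSn 1 U k) :
    Tendsto
      (fun p : ℝ × ℝ => ((p.1 - x) * (p.2 - y))⁻¹ • (k p - k (p.1, y) - k (x, p.2) + k (x, y)))
      (𝓝[≠] x ×ˢ 𝓝[≠] y) (𝓝 (pderiv2 (pderiv1 k) (x, y))) := by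
  set m := pderiv2 (pderiv1 k)
  have hm : ContinuousAt m (x, y) := by
    simpa using (hs.2.2 1 le_rfl 1 le_rfl).continuousAt hU
  rw [Metric.tendsto_nhds]
  intro ε hε
  obtain ⟨δ, hδ, hball⟩ := Metric.eventually_nhds_iff_ball.1
    (Filter.Eventually.and (p := (· ∈ U)) hU (Metric.tendsto_nhds.1 hm (ε / 2) (half_pos hε)))
  have hnear (z : ℝ) : ∀ᶠ u in 𝓝[≠] z, u ∈ Metric.ball z δ ∧ u ≠ z :=
    (eventually_nhdsWithin_of_eventually_nhds (Metric.ball_mem_nhds z hδ)).and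
      eventually_mem_nhdsWithin
  filter_upwards [prod_mem_prod (hnear x) (hnear y)] with ⟨u, v⟩ ⟨⟨hu, hux⟩, hv, hvy⟩
  have hbox : uIcc x u ×ˢ uIcc y v ⊆ Metric.ball (x, y) δ := by
    rw [← ball_prod_same]
    exact prod_mono (Real.uIcc_subset_ball hδ hu) (Real.uIcc_subset_ball hδ hv)
  have hrect := norm_rectangle_sub_le (k := k) (c := m (x, y)) (ε := ε / 2)
    (fun p hp => by simpa using hs.1 0 one_pos p (hball p (hbox hp)).1)
    (fun p hp => by simpa using hs.2.1 1 le_rfl 0 one_pos p (hball p (hbox hp)).1)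
    (fun p hp => by simpa [dist_eq_norm] using ((hball p (hbox hp)).2).le)
  have hne : (u - x) * (v - y) ≠ 0 := mul_ne_zero (sub_ne_zero.2 hux) (sub_ne_zero.2 hvy)
  have hpos : 0 < |u - x| * |v - y| := by rw [← abs_mul]; exact abs_pos.2 hne
  dsimp only
  rw [dist_eq_norm, ← inv_smul_smul₀ hne (m (x, y)), ← smul_sub, norm_smul, norm_inv,
    Real.norm_eq_abs, abs_mul]
  calc (|u - x| * |v - y|)⁻¹ * ‖_‖ ≤ (|u - x| * |v - y|)⁻¹ * (ε / 2 * |u - x| * |v - y|) := by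
        gcongr
    _ = ε / 2 := by field_simp
    _ < ε := half_lt_self hε

end Calculus

theorem cauchy_map_of_tendsto_inner {𝕜 E α : Type*} [RCLike 𝕜] [SeminormedAddCommGroup E]
    [InnerProductSpace 𝕜 E] {f : α → E} {l : Filter α} [l.NeBot] {c : 𝕜}
    (h : Tendsto (fun p : α × α => ⟪f p.1, f p.2⟫_𝕜) (l ×ˢ l) (𝓝 c)) : Cauchy (l.map f) := by
  rw [cauchy_map_iff', tendsto_uniformity_iff_dist_tendsto_zero]
  have hdiag₁ := h.comp
    (tendsto_fst.prodMk tendsto_fst : Tendsto (fun p : α × α => (p.1, p.1)) (l ×ˢ l) _)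
  have hswap := h.comp (tendsto_snd.prodMk tendsto_fst)
  have hdiag₂ := h.comp
    (tendsto_snd.prodMk tendsto_snd : Tendsto (fun p : α × α => (p.2, p.2)) (l ×ˢ l) _)
  have hsq : Tendsto (fun p : α × α => ‖f p.1 - f p.2‖ ^ 2) (l ×ˢ l) (𝓝 0) := by
    have hlim := ((hdiag₁.sub h).sub hswap).add hdiag₂
    rw [show c - c - c + c = 0 by ring] at hlim
    simpa only [Function.comp_def, ← inner_sub_sub_self, map_zero,
      ← norm_sq_eq_re_inner (𝕜 := 𝕜)] using (RCLike.continuous_re.tendsto 0).comp hlim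
  simpa [dist_eq_norm] using hsq.sqrt

theorem inner_slope_slope {E : Type*} [SeminormedAddCommGroup E] [InnerProductSpace ℂ E]
    (Φ : ℝ → E) (x v w : ℝ) :
    ⟪slope Φ x v, slope Φ x w⟫_ℂ = ((v - x) * (w - x))⁻¹ •
      (⟪Φ v, Φ w⟫_ℂ - ⟪Φ v, Φ x⟫_ℂ - ⟪Φ x, Φ w⟫_ℂ + ⟪Φ x, Φ x⟫_ℂ) := by
  simp only [slope_def_module, RCLike.real_smul_eq_coe_smul (K := ℂ), inner_smul_left,
    inner_smul_right, inner_sub_left, inner_sub_right, map_inv₀, Complex.coe_algebraMap,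
    Complex.ofReal_sub, map_sub, Complex.conj_ofReal, inner_self_eq_norm_sq_to_K,
    mul_inv_rev, Complex.ofReal_mul, Complex.ofReal_inv, smul_eq_mul]
  ring

section FeatureMap

variable {H : Type*} [NormedAddCommGroup H] [InnerProductSpace ℂ H] {k : ℝ × ℝ → ℂ}
  {Φ : ℝ → H} {V : Set ℝ}

theorem differentiableAt_of_kernel_eq_inner [CompleteSpace H] {U : Set (ℝ × ℝ)} {x : ℝ}
    (hV : V ∈ 𝓝 x) (hk : ∀ p ∈ V, ∀ q ∈ V, k (p, q) = ⟪Φ p, Φ q⟫_ℂ) (hU : U ∈ 𝓝 (x, x))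
    (hs : IsClassSn 1 U k) : DifferentiableAt ℝ Φ x := by
  have hV' : V ∈ 𝓝[≠] x := mem_nhdsWithin_of_mem_nhds hV
  have hinner : Tendsto (fun p : ℝ × ℝ => ⟪slope Φ x p.1, slope Φ x p.2⟫_ℂ)
      (𝓝[≠] x ×ˢ 𝓝[≠] x) (𝓝 (pderiv2 (pderiv1 k) (x, x))) := by
    refine (tendsto_rectangle_quotient hU hs).congr' ?_
    filter_upwards [prod_mem_prod hV' hV'] with p ⟨hp₁, hp₂⟩
    have hx := mem_of_mem_nhds hV
    rw [inner_slope_slope, hk _ hp₁ _ hp₂, hk _ hp₁ _ hx, hk _ hx _ hp₂, hk _ hx _ hx]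
  obtain ⟨L, hL⟩ := CompleteSpace.complete (cauchy_map_of_tendsto_inner hinner)
  exact (hasDerivAt_iff_tendsto_slope.2 hL).differentiableAt

theorem pderiv1_eq_inner (hV : IsOpen V) (hk : ∀ p ∈ V, ∀ q ∈ V, k (p, q) = ⟪Φ p, Φ q⟫_ℂ)
    {u v : ℝ} (hu : u ∈ V) (hv : v ∈ V) (hΦ : DifferentiableAt ℝ Φ u) :
    pderiv1 k (u, v) = ⟪deriv Φ u, Φ v⟫_ℂ := by
  have heq : (fun t => k (t, v)) =ᶠ[𝓝 u] fun t => ⟪Φ t, Φ v⟫_ℂ :=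
    eventually_of_mem (hV.mem_nhds hu) fun t ht => hk t ht v hv
  show deriv (fun t => k (t, v)) u = _
  simpa using heq.deriv_eq.trans (hΦ.hasDerivAt.inner ℂ (hasDerivAt_const u (Φ v))).deriv

theorem pderiv2_eq_inner (hV : IsOpen V) (hk : ∀ p ∈ V, ∀ q ∈ V, k (p, q) = ⟪Φ p, Φ q⟫_ℂ)
    {u v : ℝ} (hu : u ∈ V) (hv : v ∈ V) (hΦ : DifferentiableAt ℝ Φ v) :
    pderiv2 k (u, v) = ⟪Φ u, deriv Φ v⟫_ℂ := by
  have heq : (fun t => k (u, t)) =ᶠ[𝓝 v] fun t => ⟪Φ u, Φ t⟫_ℂ :=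
    eventually_of_mem (hV.mem_nhds hv) fun t ht => hk u hu t ht
  show deriv (fun t => k (u, t)) v = _
  simpa using heq.deriv_eq.trans ((hasDerivAt_const v (Φ u)).inner ℂ hΦ.hasDerivAt).deriv

end FeatureMap

theorem stmt16_general (Ω : Set ℝ) (hΩ : IsOpen Ω) (k : ℝ × ℝ → ℂ)
    (hpd : ∀ (n : ℕ) (x : Fin n → ℝ), (∀ i, x i ∈ Ω) → ∀ ξ : Fin n → ℂ,
      0 ≤ ∑ i, ∑ j, k (x i, x j) * ξ i * (starRingEnd ℂ) (ξ j))
    (U : Set (ℝ × ℝ)) (hUopen : IsOpen U)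
    (hdiag : ∀ x ∈ Ω, (x, x) ∈ U)
    (hs : IsClassSn 1 U k) :
    ∀ p ∈ Ω ×ˢ Ω,
      DifferentiableAt ℝ (fun v => pderiv1 k (p.1, v)) p.2 ∧
      DifferentiableAt ℝ (fun u => pderiv2 k (u, p.2)) p.1 := by
  rintro ⟨x, y⟩ ⟨hx, hy⟩
  obtain ⟨H, _, _, _, Φ, hk⟩ := exists_kernel_eq_inner hpd
  have hΦ : ∀ z ∈ Ω, DifferentiableAt ℝ Φ z := fun z hz =>
    differentiableAt_of_kernel_eq_inner (hΩ.mem_nhds hz) hk (hUopen.mem_nhds (hdiag z hz)) hs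
  constructor
  · refine ((differentiableAt_const (deriv Φ x)).inner ℂ (hΦ y hy)).congr_of_eventuallyEq ?_
    filter_upwards [hΩ.mem_nhds hy] with v hv using pderiv1_eq_inner hΩ hk hx hv (hΦ x hx)
  · refine ((hΦ x hx).inner ℂ (differentiableAt_const (deriv Φ y))).congr_of_eventuallyEq ?_
    filter_upwards [hΩ.mem_nhds hx] with u hu using pderiv2_eq_inner hΩ hk hu hy (hΦ y hy)

/-- For a positive definite kernel `k` on an open `Ω ⊆ ℝ` of class `S₁`
on an open neighborhood of the diagonal, both second-order mixed partial derivatives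
`∂²k/∂v∂u` and `∂²k/∂u∂v` exist at every point of `Ω × Ω`. -/
theorem stmt16 (Ω : Set ℝ) (hΩ : IsOpen Ω) (k : ℝ × ℝ → ℂ)
    (hpd : ∀ (n : ℕ) (x : Fin n → ℝ), (∀ i, x i ∈ Ω) → ∀ ξ : Fin n → ℂ,
      0 ≤ ∑ i, ∑ j, k (x i, x j) * ξ i * (starRingEnd ℂ) (ξ j))
    (U : Set (ℝ × ℝ)) (hUopen : IsOpen U)
    (hdiag : ∀ x ∈ Ω, (x, x) ∈ U) (hUsub : U ⊆ Ω ×ˢ Ω)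
    (hs : IsClassSn 1 U k) :
    ∀ p ∈ Ω ×ˢ Ω,
      DifferentiableAt ℝ (fun v => pderiv1 k (p.1, v)) p.2 ∧
      DifferentiableAt ℝ (fun u => pderiv2 k (u, p.2)) p.1 :=
  stmt16_general Ω hΩ k hpd U hUopen hdiag hs
end
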